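/- Let m : ℤ × ℤ → ℤ be an SL2-tiling over the integers and suppose the entry m(i,j) is wild. Then none of the four side-adjacent entries m(i−1,j), m(i+1,j), m(i,j−1), m(i,j+1) is wild, and at least one of the four diagonally adjacent entries m(i−1,j−1), m(i−1,j+1), m(i+1,j−1), m(i+1,j+1) is not wild. -/

import Mathlib

/-- An SL2-tiling over a commutative ring `R`. -/
def IsSL2Tiling {R : Type*} [CommRing R] (m : ℤ × ℤ → R) : Prop :=
  ∀ i j : ℤ, m (i, j) * m (i + 1, j + 1) - m (i, j + 1) * m (i + 1, j) = 1

/-- The determinant of the 3×3 block of `m` centred at `(i, j)`. -/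
def nbhdDet {R : Type*} [CommRing R] (m : ℤ × ℤ → R) (i j : ℤ) : R :=
  (Matrix.of fun u v : Fin 3 => m (i + ((u : ℕ) : ℤ) - 1, j + ((v : ℕ) : ℤ) - 1)).det

/-- The entry `m (i, j)` is wild if the surrounding 3×3 determinant is nonzero. -/
def IsWild {R : Type*} [CommRing R] (m : ℤ × ℤ → R) (i j : ℤ) : Prop :=
  nbhdDet m i j ≠ 0

/-!
In an SL2-tiling, `nbhdDet m i j * m (i, j)` is a linear combination of the four unimodular 2×2
minors around `(i, j)` minus one, hence zero; so over a domain a wild entry vanishes. Two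
side-adjacent entries cannot both vanish, as they lie in a common unimodular minor. If all four
diagonal neighbours were wild too, the 3×3 block would vanish at its centre and corners, which
kills every term of its determinant.
-/

section

variable {R : Type*} [CommRing R]

lemma nbhdDet_eq (m : ℤ × ℤ → R) (i j : ℤ) :
    nbhdDet m i j =
      m (i - 1, j - 1) * m (i, j) * m (i + 1, j + 1)
        - m (i - 1, j - 1) * m (i, j + 1) * m (i + 1, j)
        - m (i - 1, j) * m (i, j - 1) * m (i + 1, j + 1)
        + m (i - 1, j) * m (i, j + 1) * m (i + 1, j - 1)
        + m (i - 1, j + 1) * m (i, j - 1) * m (i + 1, j)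
        - m (i - 1, j + 1) * m (i, j) * m (i + 1, j - 1) := by
  rw [nbhdDet, Matrix.det_fin_three]
  simp only [Matrix.of_apply, Fin.val_zero, Fin.val_one, Fin.val_two,
    Nat.cast_ofNat, Nat.cast_zero, Nat.cast_one, add_zero, add_sub_cancel_right,
    show ∀ x : ℤ, x + 2 - 1 = x + 1 from fun x => by ring]

lemma nbhdDet_eq_zero_of_center_and_corners_eq_zero {m : ℤ × ℤ → R} {i j : ℤ}
    (h : m (i, j) = 0) (h₁ : m (i - 1, j - 1) = 0) (h₂ : m (i - 1, j + 1) = 0)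
    (h₃ : m (i + 1, j - 1) = 0) (h₄ : m (i + 1, j + 1) = 0) : nbhdDet m i j = 0 := by
  rw [nbhdDet_eq, h, h₁, h₂, h₃, h₄]
  ring

namespace IsSL2Tiling

variable {m : ℤ × ℤ → R} (hm : IsSL2Tiling m)
include hm

lemma nbhdDet_mul_self (i j : ℤ) : nbhdDet m i j * m (i, j) = 0 := by
  have h₁ := hm (i - 1) (j - 1)
  have h₂ := hm (i - 1) j
  have h₃ := hm i (j - 1)
  have h₄ := hm i j
  simp only [sub_add_cancel] at h₁ h₂ h₃
  rw [nbhdDet_eq]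
  linear_combination (m (i, j) * m (i + 1, j + 1) - m (i, j + 1) * m (i + 1, j)) * h₁ + h₄
    - (m (i, j - 1) * m (i + 1, j) - m (i, j) * m (i + 1, j - 1)) * h₂ - h₃

lemma eq_zero_of_isWild [NoZeroDivisors R] {i j : ℤ} (hw : IsWild m i j) : m (i, j) = 0 :=
  (mul_eq_zero.mp (hm.nbhdDet_mul_self i j)).resolve_left hw

lemma not_isWild_add_one_left [IsDomain R] {i j : ℤ} (hw : IsWild m i j) :
    ¬IsWild m (i + 1) j := fun hw' => by
  simpa [hm.eq_zero_of_isWild hw, hm.eq_zero_of_isWild hw'] using hm i j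

lemma not_isWild_add_one_right [IsDomain R] {i j : ℤ} (hw : IsWild m i j) :
    ¬IsWild m i (j + 1) := fun hw' => by
  simpa [hm.eq_zero_of_isWild hw, hm.eq_zero_of_isWild hw'] using hm i j

end IsSL2Tiling

end

theorem wild_entry_neighbours_not_wild (m : ℤ × ℤ → ℤ) (hm : IsSL2Tiling m)
    (i j : ℤ) (hw : IsWild m i j) :
    (¬IsWild m (i - 1) j ∧ ¬IsWild m (i + 1) j ∧
      ¬IsWild m i (j - 1) ∧ ¬IsWild m i (j + 1)) ∧
    (¬IsWild m (i - 1) (j - 1) ∨ ¬IsWild m (i - 1) (j + 1) ∨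
      ¬IsWild m (i + 1) (j - 1) ∨ ¬IsWild m (i + 1) (j + 1)) := by
  refine ⟨⟨fun hw' => ?_, hm.not_isWild_add_one_left hw,
    fun hw' => ?_, hm.not_isWild_add_one_right hw⟩, ?_⟩
  · exact hm.not_isWild_add_one_left hw' (by rwa [sub_add_cancel])
  · exact hm.not_isWild_add_one_right hw' (by rwa [sub_add_cancel])
  · by_contra! hcorners
    obtain ⟨h₁, h₂, h₃, h₄⟩ := hcorners
    exact hw <| nbhdDet_eq_zero_of_center_and_corners_eq_zero (hm.eq_zero_of_isWild hw)
      (hm.eq_zero_of_isWild h₁) (hm.eq_zero_of_isWild h₂)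
      (hm.eq_zero_of_isWild h₃) (hm.eq_zero_of_isWild h₄)
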